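/- arXiv:2506.09788 — 2 statements merged into one kernel-verified Lean document; each statement's English description precedes it below -/
import Mathlib

section
/- Let ⟨A, (-)^A, Γ, Δ⟩ be a colax algebra for a J-relative 2-monad ⟨T, η, (-)*⟩. Then the family of extension operators defines a lax transformation (-)^A : Hom_A(J−, A) ⇒ Hom_A(T−, A) of 2-functors B^op → CAT, where for a 1-cell f : b' → b the structure 2-cell at h : J b → A is the composite h^A ∘ T f = h^A ∘ (η_b ∘ J f)* ⇒ (h^A ∘ η_b ∘ J f)^A ⇒ (h ∘ J f)^A given by Δ_{h, η_b Jf} followed by (Γ_h * Jf)^A. In particular the lax transformation coherence axioms (unit and composition compatibility of the structure 2-cells) follow from the colax algebra axioms. -/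
open CategoryTheory

universe w₁ v₁ u₁ w₂ v₂ u₂


section helpers

variable {A : Type u₂} [Bicategory.{w₂, v₂} A] [Bicategory.Strict A]

lemma fam_congr' {C : Type*} [Category C] {ι : Sort*} (F G : ι → C)
    (δ : ∀ i, F i ⟶ G i) {i j : ι} (e : i = j) :
    δ i = eqToHom (by rw [e]) ≫ δ j ≫ eqToHom (by rw [e]) := by
  subst e; simp

lemma wl_congr {a b c : A} {f f' : a ⟶ b} (e : f = f') {g g' : b ⟶ c} (τ : g ⟶ g') :
    Bicategory.whiskerLeft f τ =
      eqToHom (by rw [e]) ≫ Bicategory.whiskerLeft f' τ ≫ eqToHom (by rw [e]) := by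
  subst e; simp

lemma comp_wl {a b c d : A} (f : a ⟶ b) (g : b ⟶ c) {x y : c ⟶ d} (τ : x ⟶ y) :
    Bicategory.whiskerLeft (f ≫ g) τ =
      eqToHom (Category.assoc f g x) ≫
        Bicategory.whiskerLeft f (Bicategory.whiskerLeft g τ) ≫
        eqToHom (Category.assoc f g y).symm := by
  rw [Bicategory.comp_whiskerLeft]
  simp [Bicategory.Strict.associator_eqToIso]

lemma id_wl {a b : A} {x y : a ⟶ b} (τ : x ⟶ y) :
    Bicategory.whiskerLeft (𝟙 a) τ =
      eqToHom (Category.id_comp x) ≫ τ ≫ eqToHom (Category.id_comp y).symm := by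
  rw [Bicategory.id_whiskerLeft]
  simp [Bicategory.Strict.leftUnitor_eqToIso]

end helpers

section

variable {B : Type u₁} [Bicategory.{w₁, v₁} B] [Bicategory.Strict B]
variable {A : Type u₂} [Bicategory.{w₂, v₂} A] [Bicategory.Strict A]

/-- The structure 2-cell of the lax transformation `(-)^A : Hom(J−, A) ⇒ Hom(T−, A)`
associated to a colax algebra `A` for a `J`-relative 2-monad: at a 1-cell `f : b' ⟶ b` and an
object `h : J b ⟶ A`, it is the composite of `Δ_{h, η_b ∘ Jf}` with `(Γ_h * Jf)^A`, from
`h^A ∘ T f = h^A ∘ (η_b ∘ J f)^*` to `(h ∘ J f)^A`. -/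
def laxStructCell (Jobj Tobj : B → A)
    (Jmap : ∀ {b b' : B}, (b ⟶ b') → (Jobj b ⟶ Jobj b'))
    (η : ∀ b : B, Jobj b ⟶ Tobj b)
    (rext : ∀ {a b : B}, (Jobj a ⟶ Tobj b) ⥤ (Tobj a ⟶ Tobj b))
    (AA : A)
    (extA : ∀ {b : B}, (Jobj b ⟶ AA) ⥤ (Tobj b ⟶ AA))
    (Γ : ∀ {b : B} (h : Jobj b ⟶ AA), (η b ≫ extA.obj h) ⟶ h)
    (Δ : ∀ {b c : B} (h : Jobj b ⟶ AA) (k : Jobj c ⟶ Tobj b),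
      (rext.obj k ≫ extA.obj h) ⟶ extA.obj (k ≫ extA.obj h))
    {b b' : B} (h : Jobj b ⟶ AA) (f : b' ⟶ b) :
    (rext.obj (Jmap f ≫ η b) ≫ extA.obj h) ⟶ extA.obj (Jmap f ≫ h) :=
  Δ h (Jmap f ≫ η b) ≫
    extA.map (eqToHom (by rw [Category.assoc]) ≫ Bicategory.whiskerLeft (Jmap f) (Γ h))

/-- For a colax algebra `⟨A, (-)^A, Γ, Δ⟩` over a `J`-relative 2-monad `⟨T, η, (-)^*⟩` (where
`T f := (η_b ∘ J f)^*` on 1-cells), the structure 2-cells `laxStructCell` satisfy the lax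
transformation coherence axioms: unit compatibility (at `f = 𝟙 b` the structure 2-cell is the
canonical identification) and composition compatibility (at a composite `g ≫ f` the structure
2-cell is the pasting of the structure 2-cells at `f` and at `g`). -/
theorem stmt10 (Jobj Tobj : B → A)
    (Jmap : ∀ {b b' : B}, (b ⟶ b') → (Jobj b ⟶ Jobj b'))
    (Jmap_id : ∀ b : B, Jmap (𝟙 b) = 𝟙 (Jobj b))
    (Jmap_comp : ∀ {b b' b'' : B} (f : b ⟶ b') (g : b' ⟶ b''),
      Jmap (f ≫ g) = Jmap f ≫ Jmap g)
    (η : ∀ b : B, Jobj b ⟶ Tobj b)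
    (rext : ∀ {a b : B}, (Jobj a ⟶ Tobj b) ⥤ (Tobj a ⟶ Tobj b))
    (h_unit : ∀ b : B, rext.obj (η b) = 𝟙 (Tobj b))
    (h_ext_unit : ∀ {a b : B} (f : Jobj a ⟶ Tobj b), η a ≫ rext.obj f = f)
    (h_ext_comp : ∀ {a b c : B} (f : Jobj a ⟶ Tobj b) (g : Jobj c ⟶ Tobj a),
      rext.obj (g ≫ rext.obj f) = rext.obj g ≫ rext.obj f)
    -- the colax algebra ⟨AA, extA, Γ, Δ⟩
    (AA : A)
    (extA : ∀ {b : B}, (Jobj b ⟶ AA) ⥤ (Tobj b ⟶ AA))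
    (Γ : ∀ {b : B} (h : Jobj b ⟶ AA), (η b ≫ extA.obj h) ⟶ h)
    (Δ : ∀ {b c : B} (h : Jobj b ⟶ AA) (k : Jobj c ⟶ Tobj b),
      (rext.obj k ≫ extA.obj h) ⟶ extA.obj (k ≫ extA.obj h))
    -- naturality of Γ and Δ
    (Γ_nat : ∀ {b : B} {h h' : Jobj b ⟶ AA} (τ : h ⟶ h'),
      Bicategory.whiskerLeft (η b) (extA.map τ) ≫ Γ h' = Γ h ≫ τ)
    (Δ_nat₁ : ∀ {b c : B} {h h' : Jobj b ⟶ AA} (τ : h ⟶ h') (k : Jobj c ⟶ Tobj b),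
      Bicategory.whiskerLeft (rext.obj k) (extA.map τ) ≫ Δ h' k =
        Δ h k ≫ extA.map (Bicategory.whiskerLeft k (extA.map τ)))
    (Δ_nat₂ : ∀ {b c : B} (h : Jobj b ⟶ AA) {k k' : Jobj c ⟶ Tobj b} (κ : k ⟶ k'),
      Bicategory.whiskerRight (rext.map κ) (extA.obj h) ≫ Δ h k' =
        Δ h k ≫ extA.map (Bicategory.whiskerRight κ (extA.obj h)))
    -- the colax algebra coherence axioms
    (ax_a : ∀ {b : B} (h : Jobj b ⟶ AA),
      Δ h (η b) ≫ extA.map (Γ h) =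
        eqToHom (by rw [h_unit, Category.id_comp]))
    (ax_b : ∀ {b c : B} (h : Jobj b ⟶ AA) (k : Jobj c ⟶ Tobj b),
      Bicategory.whiskerLeft (η c) (Δ h k) ≫ Γ (k ≫ extA.obj h) =
        eqToHom (by rw [← Category.assoc, h_ext_unit]))
    (ax_c : ∀ {b c d : B} (h : Jobj b ⟶ AA) (k : Jobj c ⟶ Tobj b) (l : Jobj d ⟶ Tobj c),
      Bicategory.whiskerLeft (rext.obj l) (Δ h k) ≫ Δ (k ≫ extA.obj h) l =
        eqToHom (by rw [h_ext_comp, Category.assoc]) ≫ Δ h (l ≫ rext.obj k) ≫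
          extA.map (eqToHom (by rw [Category.assoc]) ≫ Bicategory.whiskerLeft l (Δ h k))) :
    -- unit compatibility of the structure 2-cells
    (∀ {b : B} (h : Jobj b ⟶ AA),
      ∃ e : rext.obj (Jmap (𝟙 b) ≫ η b) ≫ extA.obj h = extA.obj (Jmap (𝟙 b) ≫ h),
        laxStructCell Jobj Tobj Jmap η rext AA extA Γ Δ h (𝟙 b) = eqToHom e) ∧
    -- composition compatibility of the structure 2-cells
    (∀ {b b' b'' : B} (h : Jobj b ⟶ AA) (f : b' ⟶ b) (g : b'' ⟶ b'),
      ∃ (e₁ : rext.obj (Jmap (g ≫ f) ≫ η b) ≫ extA.obj h =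
          rext.obj (Jmap g ≫ η b') ≫ rext.obj (Jmap f ≫ η b) ≫ extA.obj h)
        (e₂ : extA.obj (Jmap g ≫ (Jmap f ≫ h)) = extA.obj (Jmap (g ≫ f) ≫ h)),
        laxStructCell Jobj Tobj Jmap η rext AA extA Γ Δ h (g ≫ f) =
          eqToHom e₁ ≫
            Bicategory.whiskerLeft (rext.obj (Jmap g ≫ η b'))
              (laxStructCell Jobj Tobj Jmap η rext AA extA Γ Δ h f) ≫
            laxStructCell Jobj Tobj Jmap η rext AA extA Γ Δ (Jmap f ≫ h) g ≫
            eqToHom e₂) := by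
  constructor
  · intro b h
    have e0 : Jmap (𝟙 b) ≫ η b = η b := by rw [Jmap_id, Category.id_comp]
    refine ⟨by rw [e0, h_unit, Jmap_id, Category.id_comp, Category.id_comp], ?_⟩
    unfold laxStructCell
    beta_reduce
    rw [fam_congr' (fun k => rext.obj k ≫ extA.obj h) (fun k => extA.obj (k ≫ extA.obj h))
      (fun k => Δ h k) e0]
    rw [wl_congr (Jmap_id b) (Γ h), id_wl]
    simp only [Functor.map_comp, eqToHom_map, Category.assoc, eqToHom_trans,
      eqToHom_trans_assoc, eqToHom_refl, Category.id_comp, Category.comp_id]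
    rw [reassoc_of% (ax_a h)]
    simp
  · intro b b' b'' h f g
    have e4 : Jmap (g ≫ f) ≫ η b = (Jmap g ≫ η b') ≫ rext.obj (Jmap f ≫ η b) := by
      rw [Category.assoc, h_ext_unit, Jmap_comp, Category.assoc]
    have e1 : rext.obj (Jmap (g ≫ f) ≫ η b) ≫ extA.obj h =
        rext.obj (Jmap g ≫ η b') ≫ rext.obj (Jmap f ≫ η b) ≫ extA.obj h := by
      rw [e4, h_ext_comp, Category.assoc]
    have e2 : extA.obj (Jmap g ≫ Jmap f ≫ h) = extA.obj (Jmap (g ≫ f) ≫ h) := by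
      rw [Jmap_comp, Category.assoc]
    refine ⟨e1, e2, ?_⟩
    unfold laxStructCell
    beta_reduce
    rw [Bicategory.whiskerLeft_comp]
    simp only [Category.assoc]
    rw [reassoc_of% Δ_nat₁]
    rw [reassoc_of% (ax_c h (Jmap f ≫ η b) (Jmap g ≫ η b'))]
    rw [fam_congr' (fun k => rext.obj k ≫ extA.obj h) (fun k => extA.obj (k ≫ extA.obj h))
      (fun k => Δ h k) e4]
    simp only [Category.assoc, eqToHom_trans_assoc]
    have E2 : (eqToHom e2 : extA.obj (Jmap g ≫ Jmap f ≫ h) ⟶ extA.obj (Jmap (g ≫ f) ≫ h)) =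
        extA.map (eqToHom (by rw [Jmap_comp, Category.assoc])) := by rw [eqToHom_map]
    have E3 : (eqToHom (by rw [e4] :
          extA.obj (((Jmap g ≫ η b') ≫ rext.obj (Jmap f ≫ η b)) ≫ extA.obj h) =
            extA.obj ((Jmap (g ≫ f) ≫ η b) ≫ extA.obj h)) :
          extA.obj (((Jmap g ≫ η b') ≫ rext.obj (Jmap f ≫ η b)) ≫ extA.obj h) ⟶
            extA.obj ((Jmap (g ≫ f) ≫ η b) ≫ extA.obj h)) =
        extA.map (eqToHom (by rw [e4])) := by rw [eqToHom_map]
    rw [E2, E3]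
    simp only [← Functor.map_comp]
    congr 1
    congr 1
    rw [wl_congr (Jmap_comp g f) (Γ h), comp_wl (Jmap g) (Jmap f) (Γ h),
      comp_wl (Jmap g) (η b') (Δ h (Jmap f ≫ η b)), comp_wl]
    simp only [Category.assoc, eqToHom_trans_assoc, eqToHom_trans, eqToHom_refl,
      Category.id_comp, Category.comp_id]
    have inner : Bicategory.whiskerLeft (η b')
          (Δ h (Jmap f ≫ η b) ≫
            extA.map (eqToHom (Category.assoc _ _ _) ≫ Bicategory.whiskerLeft (Jmap f) (Γ h))) ≫
        Γ (Jmap f ≫ h) =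
        eqToHom (by rw [← Category.assoc, h_ext_unit, Category.assoc]) ≫
          Bicategory.whiskerLeft (Jmap f) (Γ h) := by
      rw [Bicategory.whiskerLeft_comp]
      rw [Category.assoc, Γ_nat, reassoc_of% (ax_b h (Jmap f ≫ η b))]
      simp
    simp only [← Bicategory.whiskerLeft_comp, ← Category.assoc]
    rw [inner]
    simp

end
end

section
/- Let β̃(1) be the category of ultrafilters (objects: pairs (X, ν) of a set and an ultrafilter on it; morphisms (X, ν) → (X', ν'): functions f : X' → X with f_*(ν') = ν). For a function h : Y → β̃(1) with h(y) = (R y, ν_y), define h^{β̃(1)} : βY → β̃(1) by ν ↦ (∐R, q*(ν)) where q(y) = (c_y)_*(ν_y), and define Γ_h : h^{β̃(1)} ∘ η_Y ⇒ h at y ∈ Y to be the morphism given by the coprojection c_y : R y → ∐R. Then Γ_h is well defined (i.e. (c_y)_*(ν_y) = q*(η_Y(y)), so c_y is a morphism (∐R, q*(η_Y(y))) → (R y, ν_y)); moreover, if there exist y ≠ y' in Y with both R y and R y' nonempty, then the component (Γ_h)_y is not an isomorphism in β̃(1). -/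
universe u

/-- In the category of ultrafilters `β̃(1)` (objects: pairs `(X, ν)`; morphisms
`(X, ν) → (X', ν')`: functions `f : X' → X` with `f_*(ν') = ν`), the counitor
`Γ_h : h^{β̃(1)} ∘ η_Y ⇒ h` of the free weak ultracategory on the point is well defined:
its component at `y` is the coprojection `c_y = Sigma.mk y`, which is a morphism
`(∐ R, q^*(η_Y y)) → (R y, ν_y)` since `(c_y)_*(ν_y) = q^*(η_Y y)`.  Moreover, if there are
two distinct indices `y ≠ y'` with `R y` and `R y'` both nonempty, then the component
`(Γ_h)_y` is not an isomorphism in `β̃(1)`: there is no inverse morphism, i.e. no two-sided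
inverse function `g` of `c_y` pushing `q^*(η_Y y)` forward to `ν_y`. -/
theorem stmt19 {Y : Type u} (R : Y → Type u) (νy : ∀ y : Y, Ultrafilter (R y)) :
    -- well-definedness of the component of Γ at y
    (∀ y : Y,
      Ultrafilter.map (Sigma.mk y) (νy y) =
        (pure y : Ultrafilter Y).bind (fun y' => (νy y').map (Sigma.mk y'))) ∧
    -- failure of invertibility
    (∀ y y' : Y, y ≠ y' → Nonempty (R y) → Nonempty (R y') →
      ¬ ∃ g : (Σ z : Y, R z) → R y,
        Ultrafilter.map g ((pure y : Ultrafilter Y).bind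
            (fun z => (νy z).map (Sigma.mk z))) = νy y ∧
        (∀ a : R y, g (Sigma.mk y a) = a) ∧
        (∀ s : Σ z : Y, R z, Sigma.mk y (g s) = s)) := by
  constructor
  · intro y
    refine Ultrafilter.coe_injective ?_
    show _ = (Filter.bind (pure y) fun x => _)
    rw [Filter.pure_bind]
  · rintro y y' hne ⟨a⟩ ⟨b⟩ ⟨g, -, -, hr⟩
    have := hr ⟨y', b⟩
    exact hne (congrArg Sigma.fst this)
end
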